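/- Let Ψ : W({white,black}) → ℕ be the map forgetting colors (sending a word to its length) and let c(w) be the color sum (number of whites minus blacks). A word w over {white, black} of even length has an 'alternating coloring preimage' characterization: the map F sending a word w' over {line, triangle} (with even total length) to the word over {white, black} given by coloring positions alternately and deleting triangles is surjective onto all words over {white, black}, and any two preimages of the same word differ only by insertion/deletion of adjacent pairs of triangles and triangles at the end. In particular, every word over {white, black} has a unique shortest preimage under F. -/

import Mathlib

/-- The functor F on words over {|, △} (| = `true`, △ = `false`): color positions
alternately white (`true`), black (`false`), starting white, then delete all △'s. -/
def Fword (w : List Bool) : List Bool :=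
  (((List.range w.length).zip w).filter fun p => p.2).map fun p => p.1 % 2 == 0

/-- One-step moves preserving F: inserting two adjacent △'s, or appending a △. -/
def Fstep (w w' : List Bool) : Prop :=
  (∃ u v, w = u ++ v ∧ w' = u ++ [false, false] ++ v) ∨ w' = w ++ [false]

/-!
Reading a word from left to right, `F` only needs to remember the parity of the current
position. Call a word reduced if it has no `△△` factor and does not end in `△`; every `△` of
a reduced word stands alone right before a `|`, and that `△` is present exactly when the color
of the `|` disagrees with the parity it would otherwise get. Hence a reduced word is determined
by its image, and every word becomes the reduced word with the same image by deleting `△△`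
factors and trailing `△`'s, which is strictly shorter unless the word was already reduced.
-/

/-- `F` with the first position colored `p` (`true` = white). -/
def FwordFrom (p : Bool) : List Bool → List Bool
  | [] => []
  | true :: w => p :: FwordFrom (!p) w
  | false :: w => FwordFrom (!p) w

/-- The reduced word whose image under `FwordFrom p` is the given colored word. -/
def minPreimageFrom (p : Bool) : List Bool → List Bool
  | [] => []
  | c :: cs =>
    if c = p then true :: minPreimageFrom (!p) cs else false :: true :: minPreimageFrom p cs

theorem Relation.EqvGen.map {α β : Type*} {r : α → α → Prop} {s : β → β → Prop}
    {f : α → β} (hf : ∀ a b, r a b → s (f a) (f b)) {a b : α} (h : EqvGen r a b) :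
    EqvGen s (f a) (f b) :=
  ((EqvGen.is_equivalence s).comap f).eqvGen_iff.1 (h.mono (fun a b hab ↦ .rel _ _ (hf a b hab)))

theorem eqvGen_Fstep_cons {w w' : List Bool} (a : Bool) (h : Relation.EqvGen Fstep w w') :
    Relation.EqvGen Fstep (a :: w) (a :: w') := by
  refine h.map fun w w' hw ↦ ?_
  rcases hw with ⟨u, v, rfl, rfl⟩ | rfl
  · exact .inl ⟨a :: u, v, rfl, rfl⟩
  · exact .inr rfl

theorem map_filter_zip_range'_eq_FwordFrom (w : List Bool) (n : ℕ) :
    (((List.range' n w.length).zip w).filter (·.2)).map (·.1 % 2 == 0)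
      = FwordFrom (n % 2 == 0) w := by
  induction w generalizing n with
  | nil => rfl
  | cons a w ih =>
    have parity : ((n + 1) % 2 == 0) = !(n % 2 == 0) := by
      rcases Nat.mod_two_eq_zero_or_one n with h | h <;> simp [Nat.add_mod, h]
    cases a <;> simp [List.range'_succ, FwordFrom, ih (n + 1), parity]

theorem Fword_eq_FwordFrom (w : List Bool) : Fword w = FwordFrom true w := by
  simpa [Fword, List.range_eq_range'] using map_filter_zip_range'_eq_FwordFrom w 0

theorem FwordFrom_append_false_false (u v : List Bool) (p : Bool) :
    FwordFrom p (u ++ false :: false :: v) = FwordFrom p (u ++ v) := by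
  induction u generalizing p with
  | nil => simp [FwordFrom]
  | cons a u ih => cases a <;> simp [FwordFrom, ih]

theorem FwordFrom_append_false (w : List Bool) (p : Bool) :
    FwordFrom p (w ++ [false]) = FwordFrom p w := by
  induction w generalizing p with
  | nil => rfl
  | cons a w ih => cases a <;> simp [FwordFrom, ih]

theorem Fword_eq_of_eqvGen_Fstep {w w' : List Bool} (h : Relation.EqvGen Fstep w w') :
    Fword w = Fword w' := by
  refine ((InvImage.equivalence _ Fword) ⟨fun _ ↦ rfl, Eq.symm, Eq.trans⟩).eqvGen_iff.1
    (h.mono fun w w' hw ↦ ?_)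
  simp only [InvImage, Fword_eq_FwordFrom]
  rcases hw with ⟨u, v, rfl, rfl⟩ | rfl
  · simp [FwordFrom_append_false_false]
  · simp [FwordFrom_append_false]

theorem FwordFrom_minPreimageFrom (cw : List Bool) (p : Bool) :
    FwordFrom p (minPreimageFrom p cw) = cw := by
  induction cw generalizing p with
  | nil => rfl
  | cons c cw ih =>
    by_cases h : c = p
    · simp [minPreimageFrom, h, FwordFrom, ih]
    · obtain rfl : c = !p := by cases c <;> cases p <;> simp_all
      simp [minPreimageFrom, FwordFrom, ih]

theorem eqvGen_minPreimageFrom_FwordFrom : ∀ (w : List Bool) (p : Bool),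
    Relation.EqvGen Fstep (minPreimageFrom p (FwordFrom p w)) w
  | [], _ => .refl []
  | true :: w, p => by
    simpa [FwordFrom, minPreimageFrom] using
      eqvGen_Fstep_cons true (eqvGen_minPreimageFrom_FwordFrom w (!p))
  | [false], p => .rel [] [false] (.inr rfl)
  | false :: false :: w, p => by
    simpa [FwordFrom] using
      (eqvGen_minPreimageFrom_FwordFrom w p).trans _ _ _ (.rel _ _ (Or.inl ⟨[], w, rfl, rfl⟩))
  | false :: true :: w, p => by
    simpa [FwordFrom, minPreimageFrom] using
      eqvGen_Fstep_cons false (eqvGen_Fstep_cons true (eqvGen_minPreimageFrom_FwordFrom w p))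

theorem minPreimageFrom_FwordFrom_eq_or_length_lt : ∀ (w : List Bool) (p : Bool),
    minPreimageFrom p (FwordFrom p w) = w ∨ (minPreimageFrom p (FwordFrom p w)).length < w.length
  | [], _ => .inl rfl
  | true :: w, p => by
    simpa [FwordFrom, minPreimageFrom] using minPreimageFrom_FwordFrom_eq_or_length_lt w (!p)
  | [false], p => .inr (by simp [FwordFrom, minPreimageFrom])
  | false :: false :: w, p => by
    simp only [FwordFrom, Bool.not_not]
    right
    rcases minPreimageFrom_FwordFrom_eq_or_length_lt w p with h | h
    · simp [h]
    · simp only [List.length_cons]; omega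
  | false :: true :: w, p => by
    simpa [FwordFrom, minPreimageFrom] using minPreimageFrom_FwordFrom_eq_or_length_lt w p

theorem length_minPreimageFrom_FwordFrom_le (w : List Bool) (p : Bool) :
    (minPreimageFrom p (FwordFrom p w)).length ≤ w.length := by
  rcases minPreimageFrom_FwordFrom_eq_or_length_lt w p with h | h
  · rw [h]
  · exact h.le

/-- F is surjective onto words over {white, black}; two words have the same image
under F iff they are related by the equivalence generated by inserting/deleting
two adjacent △'s and appending/removing △'s at the end; consequently every word
over {white, black} has a unique shortest preimage under F. -/
theorem stmt17 :
    Function.Surjective Fword ∧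
    (∀ w₁ w₂, Fword w₁ = Fword w₂ ↔ Relation.EqvGen Fstep w₁ w₂) ∧
    ∀ cw : List Bool, ∃! w : List Bool,
      Fword w = cw ∧ ∀ w', Fword w' = cw → w.length ≤ w'.length := by
  have image_minPreimage (cw : List Bool) : Fword (minPreimageFrom true cw) = cw := by
    rw [Fword_eq_FwordFrom, FwordFrom_minPreimageFrom]
  have reduce (w : List Bool) : Relation.EqvGen Fstep (minPreimageFrom true (Fword w)) w := by
    simpa [Fword_eq_FwordFrom] using eqvGen_minPreimageFrom_FwordFrom w true
  refine ⟨fun cw ↦ ⟨_, image_minPreimage cw⟩,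
    fun w₁ w₂ ↦ ⟨fun h ↦ ?_, Fword_eq_of_eqvGen_Fstep⟩, ?_⟩
  · exact (reduce w₁).symm.trans _ _ _ (h ▸ reduce w₂)
  intro cw
  refine ⟨minPreimageFrom true cw, ⟨image_minPreimage cw, ?_⟩, ?_⟩
  · rintro w rfl
    simpa [Fword_eq_FwordFrom] using length_minPreimageFrom_FwordFrom_le w true
  · rintro w ⟨rfl, hmin⟩
    rw [Fword_eq_FwordFrom]
    refine ((minPreimageFrom_FwordFrom_eq_or_length_lt w true).resolve_right (not_lt.2 ?_)).symm
    simpa [Fword_eq_FwordFrom] using hmin _ (image_minPreimage (Fword w))
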